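/- arXiv:1910.01079 — 2 statements merged into one kernel-verified Lean document; each statement's English description precedes it below -/
import Mathlib

section
/- Let A and B be m×n real matrices with a simultaneous block structure, and let b be the number of blocks. Let P and Q be m×n matrices such that every entry of P is 0 or 1 and every entry of Q lies in [0,1]. Then ‖(A−B)∘Q‖_F̄ ≤ ‖(A−B)∘P‖_F̄ + √(b·‖P−Q‖_□) · ‖A−B‖_∞. -/
open Filter MeasureTheory
open scoped Topology

/-- The ℓ∞ norm of a matrix: the maximum absolute value of its entries. -/
noncomputable def linfNorm {m n : ℕ} (A : Matrix (Fin m) (Fin n) ℝ) : ℝ :=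
  ⨆ i, ⨆ j, |A i j|

/-- The averaged Frobenius norm ‖A‖_F̄ = √( (1/(mn)) ∑ aᵢⱼ² ). -/
noncomputable def avgFrobNorm {m n : ℕ} (A : Matrix (Fin m) (Fin n) ℝ) : ℝ :=
  Real.sqrt ((∑ i, ∑ j, (A i j) ^ 2) / (m * n))

/-- The (normalized) cut norm ‖A‖_□ = (1/(mn)) max{ |xᵀAy| : ‖x‖_∞ ≤ 1, ‖y‖_∞ ≤ 1 }. -/
noncomputable def cutNorm {m n : ℕ} (A : Matrix (Fin m) (Fin n) ℝ) : ℝ :=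
  sSup {r : ℝ | ∃ (x : Fin m → ℝ) (y : Fin n → ℝ),
    (∀ i, |x i| ≤ 1) ∧ (∀ j, |y j| ≤ 1) ∧
    r = |∑ i, ∑ j, x i * A i j * y j| / (m * n)}

/-- A binary matrix: every entry is 0 or 1. -/
def IsBinary {m n : ℕ} (P : Matrix (Fin m) (Fin n) ℝ) : Prop :=
  ∀ i j, P i j = 0 ∨ P i j = 1

lemma cut_bddAbove {m n : ℕ} (A : Matrix (Fin m) (Fin n) ℝ) :
    BddAbove {r : ℝ | ∃ (x : Fin m → ℝ) (y : Fin n → ℝ),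
      (∀ i, |x i| ≤ 1) ∧ (∀ j, |y j| ≤ 1) ∧
      r = |∑ i, ∑ j, x i * A i j * y j| / (m * n)} := by
  refine ⟨∑ i, ∑ j, |A i j|, ?_⟩
  rintro r ⟨x, y, hx, hy, rfl⟩
  have hnn : (0:ℝ) ≤ ∑ i, ∑ j, |A i j| :=
    Finset.sum_nonneg fun i _ => Finset.sum_nonneg fun j _ => abs_nonneg _
  have habs : |∑ i, ∑ j, x i * A i j * y j| ≤ ∑ i, ∑ j, |A i j| := by
    calc |∑ i, ∑ j, x i * A i j * y j| ≤ ∑ i, |∑ j, x i * A i j * y j| :=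
          Finset.abs_sum_le_sum_abs _ _
      _ ≤ ∑ i, ∑ j, |x i * A i j * y j| :=
          Finset.sum_le_sum fun i _ => Finset.abs_sum_le_sum_abs _ _
      _ ≤ ∑ i, ∑ j, |A i j| := by
          refine Finset.sum_le_sum fun i _ => Finset.sum_le_sum fun j _ => ?_
          rw [abs_mul, abs_mul]
          have h1 : |x i| * |A i j| * |y j| ≤ 1 * |A i j| * 1 :=
            mul_le_mul (mul_le_mul (hx i) le_rfl (abs_nonneg _) zero_le_one) (hy j)
              (abs_nonneg _) (by positivity)
          linarith
  by_cases hmn : (m:ℝ) * n = 0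
  · rw [hmn, div_zero]; exact hnn
  · have h1 : (1:ℝ) ≤ (m:ℝ) * n := by
      have hm : m ≠ 0 := by rintro rfl; simp at hmn
      have hn : n ≠ 0 := by rintro rfl; simp at hmn
      have hm1 : (1:ℝ) ≤ (m:ℝ) := by exact_mod_cast Nat.one_le_iff_ne_zero.2 hm
      have hn1 : (1:ℝ) ≤ (n:ℝ) := by exact_mod_cast Nat.one_le_iff_ne_zero.2 hn
      nlinarith
    exact le_trans (div_le_self (abs_nonneg _) h1) habs

lemma cutNorm_nonneg {m n : ℕ} (A : Matrix (Fin m) (Fin n) ℝ) : 0 ≤ cutNorm A := by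
  refine le_csSup (cut_bddAbove A) ⟨0, 0, by simp, by simp, by simp⟩

lemma le_cutNorm {m n : ℕ} (A : Matrix (Fin m) (Fin n) ℝ) (x : Fin m → ℝ) (y : Fin n → ℝ)
    (hx : ∀ i, |x i| ≤ 1) (hy : ∀ j, |y j| ≤ 1) :
    |∑ i, ∑ j, x i * A i j * y j| / (m * n) ≤ cutNorm A :=
  le_csSup (cut_bddAbove A) ⟨x, y, hx, hy, rfl⟩

lemma abs_le_linfNorm {m n : ℕ} (A : Matrix (Fin m) (Fin n) ℝ) (i : Fin m) (j : Fin n) :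
    |A i j| ≤ linfNorm A :=
  le_trans (le_ciSup (Finite.bddAbove_range fun j => |A i j|) j)
    (le_ciSup (Finite.bddAbove_range fun i => ⨆ j, |A i j|) i)

lemma linfNorm_nonneg {m n : ℕ} (A : Matrix (Fin m) (Fin n) ℝ) : 0 ≤ linfNorm A := by
  rcases isEmpty_or_nonempty (Fin m) with h | h
  · rw [linfNorm, Real.iSup_of_isEmpty]
  · rcases isEmpty_or_nonempty (Fin n) with h' | h'
    · simp [linfNorm, Real.iSup_of_isEmpty]
    · exact le_trans (abs_nonneg _) (abs_le_linfNorm A h.some h'.some)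

lemma sum_split {m n s t : ℕ} (f : Fin m → Fin s) (g : Fin n → Fin t) (G : Fin m → Fin n → ℝ) :
    ∑ i, ∑ j, G i j = ∑ k : Fin s, ∑ l : Fin t, ∑ i, ∑ j,
      (if f i = k then (1:ℝ) else 0) * G i j * (if g j = l then 1 else 0) := by
  have step1 : ∀ i j, ∑ k : Fin s, ∑ l : Fin t,
      (if f i = k then (1:ℝ) else 0) * G i j * (if g j = l then 1 else 0) = G i j := by
    intro i j
    simp [ite_mul, mul_ite, Finset.sum_ite_eq, zero_mul, mul_zero, one_mul, mul_one]
  calc ∑ i, ∑ j, G i j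
      = ∑ i, ∑ j, ∑ k : Fin s, ∑ l : Fin t,
          (if f i = k then (1:ℝ) else 0) * G i j * (if g j = l then 1 else 0) :=
        Finset.sum_congr rfl fun i _ => Finset.sum_congr rfl fun j _ => (step1 i j).symm
    _ = ∑ i, ∑ k : Fin s, ∑ j, ∑ l : Fin t,
          (if f i = k then (1:ℝ) else 0) * G i j * (if g j = l then 1 else 0) :=
        Finset.sum_congr rfl fun i _ => Finset.sum_comm
    _ = ∑ k : Fin s, ∑ i, ∑ j, ∑ l : Fin t,
          (if f i = k then (1:ℝ) else 0) * G i j * (if g j = l then 1 else 0) :=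
        Finset.sum_comm
    _ = ∑ k : Fin s, ∑ i, ∑ l : Fin t, ∑ j,
          (if f i = k then (1:ℝ) else 0) * G i j * (if g j = l then 1 else 0) :=
        Finset.sum_congr rfl fun k _ => Finset.sum_congr rfl fun i _ => Finset.sum_comm
    _ = ∑ k : Fin s, ∑ l : Fin t, ∑ i, ∑ j,
          (if f i = k then (1:ℝ) else 0) * G i j * (if g j = l then 1 else 0) :=
        Finset.sum_congr rfl fun k _ => Finset.sum_comm

/-- Lemma 7.3: if A and B have a simultaneous block structure with at most b blocks
(encoded by a common pair of row/column classifying maps f, g with s·t ≤ b), P is binary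
and Q has entries in [0,1], then
‖(A−B)∘Q‖_F̄ ≤ ‖(A−B)∘P‖_F̄ + √(b·‖P−Q‖_□)·‖A−B‖_∞. -/
theorem stmt3 {m n s t : ℕ} (A B P Q : Matrix (Fin m) (Fin n) ℝ)
    (f : Fin m → Fin s) (g : Fin n → Fin t) (b : ℕ)
    (hA : ∀ i i' j j', f i = f i' → g j = g j' → A i j = A i' j')
    (hB : ∀ i i' j j', f i = f i' → g j = g j' → B i j = B i' j')
    (hb : s * t ≤ b)
    (hP : IsBinary P)
    (hQ : ∀ i j, Q i j ∈ Set.Icc (0 : ℝ) 1) :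
    avgFrobNorm (Matrix.hadamard (A - B) Q) ≤
      avgFrobNorm (Matrix.hadamard (A - B) P) +
        Real.sqrt ((b : ℝ) * cutNorm (P - Q)) * linfNorm (A - B) := by
  classical
  set D : Matrix (Fin m) (Fin n) ℝ := A - B with hDdef
  have hDblock : ∀ i i' j j', f i = f i' → g j = g j' → D i j = D i' j' := by
    intro i i' j j' h1 h2
    simp only [hDdef, Matrix.sub_apply, hA i i' j j' h1 h2, hB i i' j j' h1 h2]
  set C := cutNorm (P - Q) with hCdef
  set L := linfNorm D with hLdef
  have hC : 0 ≤ C := cutNorm_nonneg _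
  have hL : 0 ≤ L := linfNorm_nonneg _
  set μ : ℝ := (m : ℝ) * n with hμdef
  have hμ : 0 ≤ μ := by positivity
  -- per-block bound
  have block : ∀ (k : Fin s) (l : Fin t),
      (∑ i, ∑ j, (if f i = k then (1:ℝ) else 0) * ((D i j)^2 * (Q i j - P i j)) *
        (if g j = l then 1 else 0)) ≤ L^2 * (μ * C) := by
    intro k l
    have hrhs : (0:ℝ) ≤ L^2 * (μ * C) := mul_nonneg (sq_nonneg _) (mul_nonneg hμ hC)
    by_cases hk : ∃ i0, f i0 = k
    · by_cases hl : ∃ j0, g j0 = l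
      · obtain ⟨i0, hi0⟩ := hk
        obtain ⟨j0, hj0⟩ := hl
        set x : Fin m → ℝ := fun i => if f i = k then 1 else 0 with hxdef
        set y : Fin n → ℝ := fun j => if g j = l then 1 else 0 with hydef
        have hx : ∀ i, |x i| ≤ 1 := by
          intro i; simp only [hxdef]; split <;> simp
        have hy : ∀ j, |y j| ≤ 1 := by
          intro j; simp only [hydef]; split <;> simp
        have hterm : ∀ i j, (if f i = k then (1:ℝ) else 0) * ((D i j)^2 * (Q i j - P i j)) *
            (if g j = l then 1 else 0)
            = (D i0 j0)^2 * (x i * (Q i j - P i j) * y j) := by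
          intro i j
          simp only [hxdef, hydef]
          by_cases h1 : f i = k
          · by_cases h2 : g j = l
            · have hd := hDblock i i0 j j0 (by rw [h1, hi0]) (by rw [h2, hj0])
              rw [if_pos h1, if_pos h2, hd]; ring
            · rw [if_neg h2]; ring
          · rw [if_neg h1]; ring
        have hsum : (∑ i, ∑ j, (if f i = k then (1:ℝ) else 0) * ((D i j)^2 * (Q i j - P i j)) *
            (if g j = l then 1 else 0))
            = (D i0 j0)^2 * ∑ i, ∑ j, x i * (Q i j - P i j) * y j := by
          simp_rw [hterm, ← Finset.mul_sum]
        have hmem : |∑ i, ∑ j, x i * ((P - Q) i j) * y j| / ((m:ℝ) * n) ≤ C :=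
          le_cutNorm (P - Q) x y hx hy
        have habs_eq : |∑ i, ∑ j, x i * (Q i j - P i j) * y j|
            = |∑ i, ∑ j, x i * ((P - Q) i j) * y j| := by
          rw [← abs_neg]
          congr 1
          rw [← Finset.sum_neg_distrib]
          refine Finset.sum_congr rfl fun i _ => ?_
          rw [← Finset.sum_neg_distrib]
          refine Finset.sum_congr rfl fun j _ => ?_
          simp only [Matrix.sub_apply]; ring
        have hmpos : (0:ℝ) < μ := by
          have h1 : 0 < m := i0.pos
          have h2 : 0 < n := j0.pos
          rw [hμdef]; positivity
        have hXle : |∑ i, ∑ j, x i * (Q i j - P i j) * y j| ≤ μ * C := by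
          rw [habs_eq]
          rw [div_le_iff₀ hmpos] at hmem
          calc |∑ i, ∑ j, x i * ((P - Q) i j) * y j| ≤ C * μ := hmem
            _ = μ * C := mul_comm _ _
        have hd2 : (D i0 j0)^2 ≤ L^2 := by
          have h := abs_le_linfNorm D i0 j0
          nlinarith [abs_nonneg (D i0 j0), sq_abs (D i0 j0)]
        rw [hsum]
        calc (D i0 j0)^2 * ∑ i, ∑ j, x i * (Q i j - P i j) * y j
            ≤ (D i0 j0)^2 * |∑ i, ∑ j, x i * (Q i j - P i j) * y j| :=
              mul_le_mul_of_nonneg_left (le_abs_self _) (sq_nonneg _)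
          _ ≤ L^2 * (μ * C) :=
              mul_le_mul hd2 hXle (abs_nonneg _) (sq_nonneg _)
      · have hz : (∑ i, ∑ j, (if f i = k then (1:ℝ) else 0) * ((D i j)^2 * (Q i j - P i j)) *
            (if g j = l then 1 else 0)) = 0 :=
          Finset.sum_eq_zero fun i _ => Finset.sum_eq_zero fun j _ => by
            have h2 : ¬ (g j = l) := fun h => hl ⟨j, h⟩
            simp [h2]
        rw [hz]; exact hrhs
    · have hz : (∑ i, ∑ j, (if f i = k then (1:ℝ) else 0) * ((D i j)^2 * (Q i j - P i j)) *
          (if g j = l then 1 else 0)) = 0 :=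
        Finset.sum_eq_zero fun i _ => Finset.sum_eq_zero fun j _ => by
          have h1 : ¬ (f i = k) := fun h => hk ⟨i, h⟩
          simp [h1]
      rw [hz]; exact hrhs
  -- pointwise inequality
  have pointwise : ∀ i j, (D i j * Q i j)^2 ≤ (D i j * P i j)^2 + (D i j)^2 * (Q i j - P i j) := by
    intro i j
    obtain ⟨hq0, hq1⟩ := hQ i j
    have hq2 : 0 ≤ (D i j)^2 * Q i j * (1 - Q i j) :=
      mul_nonneg (mul_nonneg (sq_nonneg _) hq0) (by linarith)
    rcases hP i j with h | h <;> rw [h] <;> nlinarith [hq2]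
  -- global sum inequality
  have key : (∑ i, ∑ j, (D i j * Q i j)^2)
      ≤ (∑ i, ∑ j, (D i j * P i j)^2) + (b:ℝ) * C * L^2 * μ := by
    have h1 : (∑ i, ∑ j, (D i j * Q i j)^2)
        ≤ (∑ i, ∑ j, (D i j * P i j)^2) + ∑ i, ∑ j, (D i j)^2 * (Q i j - P i j) := by
      have := Finset.sum_le_sum (s := (Finset.univ : Finset (Fin m)))
        fun i _ => Finset.sum_le_sum (s := (Finset.univ : Finset (Fin n)))
          fun j _ => pointwise i j
      calc (∑ i, ∑ j, (D i j * Q i j)^2)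
          ≤ ∑ i, ∑ j, ((D i j * P i j)^2 + (D i j)^2 * (Q i j - P i j)) := this
        _ = (∑ i, ∑ j, (D i j * P i j)^2) + ∑ i, ∑ j, (D i j)^2 * (Q i j - P i j) := by
            simp [Finset.sum_add_distrib]
    have h2 : (∑ i, ∑ j, (D i j)^2 * (Q i j - P i j)) ≤ (b:ℝ) * C * L^2 * μ := by
      rw [sum_split f g (fun i j => (D i j)^2 * (Q i j - P i j))]
      have h3 : (∑ k : Fin s, ∑ l : Fin t, ∑ i, ∑ j,
          (if f i = k then (1:ℝ) else 0) * ((D i j)^2 * (Q i j - P i j)) *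
            (if g j = l then 1 else 0))
          ≤ ∑ _k : Fin s, ∑ _l : Fin t, L^2 * (μ * C) :=
        Finset.sum_le_sum fun k _ => Finset.sum_le_sum fun l _ => block k l
      have h4 : (∑ _k : Fin s, ∑ _l : Fin t, L^2 * (μ * C)) = (s:ℝ) * t * (L^2 * (μ * C)) := by
        simp [Finset.sum_const, Finset.card_univ]; ring
      have h5 : ((s:ℝ) * t) ≤ (b:ℝ) := by exact_mod_cast hb
      have h6 : 0 ≤ L^2 * (μ * C) := mul_nonneg (sq_nonneg _) (mul_nonneg hμ hC)
      calc _ ≤ (s:ℝ) * t * (L^2 * (μ * C)) := by rw [← h4]; exact h3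
        _ ≤ (b:ℝ) * (L^2 * (μ * C)) := mul_le_mul_of_nonneg_right h5 h6
        _ = (b:ℝ) * C * L^2 * μ := by ring
    linarith
  -- conclusion
  have hSP : (0:ℝ) ≤ (∑ i, ∑ j, (D i j * P i j)^2) :=
    Finset.sum_nonneg fun i _ => Finset.sum_nonneg fun j _ => sq_nonneg _
  have ha : (0:ℝ) ≤ (∑ i, ∑ j, (D i j * P i j)^2) / μ := div_nonneg hSP hμ
  have hbC : (0:ℝ) ≤ (b:ℝ) * C := mul_nonneg (Nat.cast_nonneg _) hC
  have hdiv : (∑ i, ∑ j, (D i j * Q i j)^2) / μ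
      ≤ (∑ i, ∑ j, (D i j * P i j)^2) / μ + (b:ℝ) * C * L^2 := by
    rcases eq_or_lt_of_le hμ with h0 | hpos
    · rw [← h0, div_zero, div_zero]
      have : 0 ≤ (b:ℝ) * C * L^2 := mul_nonneg hbC (sq_nonneg _)
      linarith
    · calc (∑ i, ∑ j, (D i j * Q i j)^2) / μ
          ≤ ((∑ i, ∑ j, (D i j * P i j)^2) + (b:ℝ) * C * L^2 * μ) / μ :=
            (div_le_div_iff_of_pos_right hpos).mpr key
        _ = (∑ i, ∑ j, (D i j * P i j)^2) / μ + (b:ℝ) * C * L^2 := by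
            field_simp
  have hgoal_sq : (∑ i, ∑ j, (D i j * Q i j)^2) / μ
      ≤ (Real.sqrt ((∑ i, ∑ j, (D i j * P i j)^2) / μ) + Real.sqrt ((b:ℝ) * C) * L)^2 := by
    have e1 := Real.sq_sqrt ha
    have e2 := Real.sq_sqrt hbC
    have n1 := Real.sqrt_nonneg ((∑ i, ∑ j, (D i j * P i j)^2) / μ)
    have n2 := Real.sqrt_nonneg ((b:ℝ) * C)
    nlinarith [mul_nonneg (mul_nonneg n1 n2) hL]
  have hfront : avgFrobNorm (Matrix.hadamard D Q)
      = Real.sqrt ((∑ i, ∑ j, (D i j * Q i j)^2) / μ) := by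
    simp [avgFrobNorm, Matrix.hadamard_apply, hμdef]
  have hback : avgFrobNorm (Matrix.hadamard D P)
      = Real.sqrt ((∑ i, ∑ j, (D i j * P i j)^2) / μ) := by
    simp [avgFrobNorm, Matrix.hadamard_apply, hμdef]
  rw [hfront, hback]
  calc Real.sqrt ((∑ i, ∑ j, (D i j * Q i j)^2) / μ)
      ≤ Real.sqrt ((Real.sqrt ((∑ i, ∑ j, (D i j * P i j)^2) / μ)
          + Real.sqrt ((b:ℝ) * C) * L)^2) := Real.sqrt_le_sqrt hgoal_sq
    _ = Real.sqrt ((∑ i, ∑ j, (D i j * P i j)^2) / μ) + Real.sqrt ((b:ℝ) * C) * L :=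
        Real.sqrt_sq (add_nonneg (Real.sqrt_nonneg _) (mul_nonneg (Real.sqrt_nonneg _) hL))
end

section
/- For each even k, let P_k be the k×k binary matrix whose entries are 1 in the first k/2 rows and 0 elsewhere. Let A_k be the k×k zero matrix and let B_k be the k×k matrix whose entries are 0 in the top k/2 rows and 1 elsewhere. Then ‖A_k‖_∞, ‖B_k‖_∞ ≤ 1 and rank(A_k), rank(B_k) ≤ 1 for all k, lim_{k→∞} ‖(A_k − B_k)∘P_k‖_F̄ = 0, and lim_{k→∞} ‖A_k − B_k‖_F̄ = 1/√2. Consequently, the sequence {P_k} does not admit stable recovery of low rank matrices. -/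
open Filter MeasureTheory
open scoped Topology

/-- A sequence of binary matrices P_k admits stable recovery of low rank matrices: for
all rank bounds K and sup-norm bounds L and every ε > 0 there is δ > 0 (depending only on
ε, K, L) such that for any sequences A_k, B_k with rank ≤ K and ℓ∞-norm ≤ L,
limsup ‖(A_k−B_k)∘P_k‖_F̄ ≤ δ implies limsup ‖A_k−B_k‖_F̄ ≤ ε. -/
def AdmitsStableRecovery (m n : ℕ → ℕ) (P : ∀ k, Matrix (Fin (m k)) (Fin (n k)) ℝ) : Prop :=
  ∀ (K : ℕ) (L ε : ℝ), 0 < ε → ∃ δ : ℝ, 0 < δ ∧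
    ∀ (A B : ∀ k, Matrix (Fin (m k)) (Fin (n k)) ℝ),
      (∀ k, (A k).rank ≤ K ∧ (B k).rank ≤ K ∧ linfNorm (A k) ≤ L ∧ linfNorm (B k) ≤ L) →
      Filter.limsup (fun k => avgFrobNorm (Matrix.hadamard (A k - B k) (P k))) Filter.atTop ≤ δ →
      Filter.limsup (fun k => avgFrobNorm (A k - B k)) Filter.atTop ≤ ε

/-- The (2k)×(2k) binary pattern revealing exactly the top k rows. -/
def P15 (k : ℕ) : Matrix (Fin (2 * k)) (Fin (2 * k)) ℝ :=
  fun i _ => if (i : ℕ) < k then 1 else 0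

/-- The (2k)×(2k) zero matrix. -/
def A15 (k : ℕ) : Matrix (Fin (2 * k)) (Fin (2 * k)) ℝ := 0

/-- The (2k)×(2k) matrix that is 0 in the top k rows and 1 elsewhere. -/
def B15 (k : ℕ) : Matrix (Fin (2 * k)) (Fin (2 * k)) ℝ :=
  fun i _ => if (i : ℕ) < k then 0 else 1

-- `0 ≤ c` is needed because the empty supremum (for `m = 0` or `n = 0`) is `0` in `ℝ`.
lemma linfNorm_le {m n : ℕ} {A : Matrix (Fin m) (Fin n) ℝ} {c : ℝ} (hc : 0 ≤ c)
    (h : ∀ i j, |A i j| ≤ c) : linfNorm A ≤ c :=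
  Real.iSup_le (fun i => Real.iSup_le (h i) hc) hc

@[simp]
lemma avgFrobNorm_zero {m n : ℕ} : avgFrobNorm (0 : Matrix (Fin m) (Fin n) ℝ) = 0 := by
  simp [avgFrobNorm]

lemma avgFrobNorm_of_forall_eq_row {m n : ℕ} (hn : n ≠ 0) {A : Matrix (Fin m) (Fin n) ℝ}
    (r : Fin m → ℝ) (hA : ∀ i j, A i j = r i) :
    avgFrobNorm A = √((∑ i, r i ^ 2) / m) := by
  have hn' : (n : ℝ) ≠ 0 := Nat.cast_ne_zero.mpr hn
  simp only [avgFrobNorm, hA, Finset.sum_const, Finset.card_univ, Fintype.card_fin,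
    nsmul_eq_mul, ← Finset.mul_sum]
  rw [mul_comm (m : ℝ), mul_div_mul_left _ _ hn']

lemma sum_fin_ite_val_lt_zero_one (n k : ℕ) :
    ∑ i : Fin n, (if (i : ℕ) < k then (0 : ℝ) else 1) = n - min n k := by
  have hcompl : ∀ i : Fin n, (if (i : ℕ) < k then (0 : ℝ) else 1)
      = 1 - if (i : ℕ) < k then 1 else 0 := fun i => by split_ifs <;> norm_num
  simp only [hcompl, Finset.sum_sub_distrib, Finset.sum_boole, Fin.card_filter_val_lt]
  simp

lemma not_admitsStableRecovery_of_tendsto {m n : ℕ → ℕ}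
    {P : ∀ k, Matrix (Fin (m k)) (Fin (n k)) ℝ} (A B : ∀ k, Matrix (Fin (m k)) (Fin (n k)) ℝ)
    (K : ℕ) (L : ℝ)
    (hbound : ∀ k, (A k).rank ≤ K ∧ (B k).rank ≤ K ∧ linfNorm (A k) ≤ L ∧ linfNorm (B k) ≤ L)
    (hobs : Tendsto (fun k => avgFrobNorm (Matrix.hadamard (A k - B k) (P k))) atTop (𝓝 0))
    {c : ℝ} (hc : 0 < c) (hfull : Tendsto (fun k => avgFrobNorm (A k - B k)) atTop (𝓝 c)) :
    ¬ AdmitsStableRecovery m n P := by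
  intro h
  obtain ⟨δ, hδ, hrec⟩ := h K L (c / 2) (half_pos hc)
  have := hrec A B hbound (hobs.limsup_eq.trans_le hδ.le)
  rw [hfull.limsup_eq] at this
  linarith

lemma hadamard_sub_A15_B15_P15 (k : ℕ) : Matrix.hadamard (A15 k - B15 k) (P15 k) = 0 := by
  ext i j
  simp only [Matrix.hadamard_apply, Matrix.sub_apply, A15, B15, P15, Matrix.zero_apply]
  split_ifs <;> ring

lemma B15_eq_vecMulVec (k : ℕ) :
    B15 k = Matrix.vecMulVec (fun i : Fin (2 * k) => if (i : ℕ) < k then 0 else 1) 1 := by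
  ext i j
  simp [B15, Matrix.vecMulVec_apply]

lemma rank_B15_le_one (k : ℕ) : (B15 k).rank ≤ 1 :=
  B15_eq_vecMulVec k ▸ Matrix.rank_vecMulVec_le _ _

lemma linfNorm_B15_le_one (k : ℕ) : linfNorm (B15 k) ≤ 1 :=
  linfNorm_le zero_le_one fun i j => by unfold B15; split_ifs <;> norm_num

lemma avgFrobNorm_A15_sub_B15 {k : ℕ} (hk : k ≠ 0) :
    avgFrobNorm (A15 k - B15 k) = 1 / √2 := by
  rw [avgFrobNorm_of_forall_eq_row (by omega) (fun i => if (i : ℕ) < k then 0 else -1)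
    (fun i j => by simp only [A15, B15, Matrix.sub_apply, Matrix.zero_apply]; split_ifs <;> ring)]
  have hsq : ∀ i : Fin (2 * k), (if (i : ℕ) < k then (0 : ℝ) else -1) ^ 2
      = if (i : ℕ) < k then 0 else 1 := fun i => by split_ifs <;> norm_num
  have hhalf : ((2 * k : ℕ) - k : ℝ) / (2 * k : ℕ) = 2⁻¹ := by
    have hk' : (k : ℝ) ≠ 0 := Nat.cast_ne_zero.mpr hk
    push_cast
    field_simp
    ring
  simp only [hsq, sum_fin_ite_val_lt_zero_one, min_eq_right (Nat.le_mul_of_pos_left k two_pos)]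
  rw [hhalf, Real.sqrt_inv, one_div]

/-- The counterexample of Section 3: with only the top half of the rows revealed,
A_k = 0 and B_k equal to 0 on the top half and 1 on the bottom half have ranks ≤ 1 and
entries bounded by 1, ‖(A_k−B_k)∘P_k‖_F̄ → 0 but ‖A_k−B_k‖_F̄ → 1/√2; consequently
the patterns P_k do not admit stable recovery of low rank matrices. -/
theorem stmt15 :
    (∀ k, linfNorm (A15 k) ≤ 1 ∧ linfNorm (B15 k) ≤ 1 ∧
      (A15 k).rank ≤ 1 ∧ (B15 k).rank ≤ 1) ∧
    Tendsto (fun k => avgFrobNorm (Matrix.hadamard (A15 k - B15 k) (P15 k)))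
      atTop (𝓝 0) ∧
    Tendsto (fun k => avgFrobNorm (A15 k - B15 k)) atTop (𝓝 (1 / Real.sqrt 2)) ∧
    ¬ AdmitsStableRecovery (fun k => 2 * k) (fun k => 2 * k) P15 := by
  have hbound : ∀ k, linfNorm (A15 k) ≤ 1 ∧ linfNorm (B15 k) ≤ 1 ∧
      (A15 k).rank ≤ 1 ∧ (B15 k).rank ≤ 1 := fun k =>
    ⟨linfNorm_le zero_le_one (by simp [A15]), linfNorm_B15_le_one k, by simp [A15],
      rank_B15_le_one k⟩
  have hobs : Tendsto (fun k => avgFrobNorm (Matrix.hadamard (A15 k - B15 k) (P15 k)))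
      atTop (𝓝 0) := by
    simp only [hadamard_sub_A15_B15_P15, avgFrobNorm_zero, tendsto_const_nhds]
  have hfull : Tendsto (fun k => avgFrobNorm (A15 k - B15 k)) atTop (𝓝 (1 / √2)) :=
    tendsto_const_nhds.congr' <| (eventually_ne_atTop 0).mono fun k hk =>
      (avgFrobNorm_A15_sub_B15 hk).symm
  refine ⟨hbound, hobs, hfull, not_admitsStableRecovery_of_tendsto A15 B15 1 1
    (fun k => ⟨(hbound k).2.2.1, (hbound k).2.2.2, (hbound k).1, (hbound k).2.1⟩) hobs
    (by positivity) hfull⟩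
end
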